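/- Let p ∈ [0,1] and consider the homogeneous Markov chain {Y^{(t)}} on state space {0,1,2,3} with Y^{(0)} = 0 and transition probabilities P(j → j+1) = (3-j)p/6 and P(j → j) = 1 - (3-j)p/6 for j = 0,1,2, and state 3 absorbing. Then the expected number of triangles in G(n,p;C([n],4)) equals C(n,3)·[(1 - Σ_{i=0}^{2} p_{0i}^{(n-3)}) + Σ_{i=0}^{2} p_{0i}^{(n-3)}·(P(Bin(C(n-3,2), p/6) ≥ 1))^{3-i}], where p_{0i}^{(n-3)} is the (0,i) entry of the (n-3)-rd power of the transition matrix. -/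

import Mathlib

open scoped ENNReal

/-- Bernoulli with success probability `min q 1`. -/
noncomputable def bern (q : ℝ≥0∞) : PMF Bool :=
  PMF.ofFintype (fun b => cond b (min q 1) (1 - min q 1)) (by simp [min_le_right q 1])

/-- For a hyperedge `H`, choose a uniformly random doubleton `D ⊆ H` and output `some D`
with probability `p` (an edge is placed on `D`), `none` otherwise. -/
noncomputable def edgePMF {n : ℕ} (p : ℝ≥0∞) (H : Finset (Fin n)) :
    PMF (Option (Finset (Fin n))) :=
  if h : (H.powersetCard 2).Nonempty then
    (PMF.uniformOfFinset _ h).bind fun D =>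
      (bern p).map fun b => if b then some D else none
  else PMF.pure none

/-- The random multigraph `G(n, p; 𝓗)`: for each hyperedge of the list `𝓗` independently,
choose a uniformly random doubleton and join its two vertices by an edge with probability `p`.
The resulting multigraph is recorded as the multiset of its edges (doubletons, with
multiplicity). -/
noncomputable def modelPMF {n : ℕ} (p : ℝ≥0∞) :
    List (Finset (Fin n)) → PMF (Multiset (Finset (Fin n)))
  | [] => PMF.pure 0
  | H :: T => (edgePMF p H).bind fun o =>
      (modelPMF p T).map fun G => o.elim G (fun D => D ::ₘ G)

/-- Probability that a sample from `μ` lies in `S`. -/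
noncomputable def prob {α : Type*} (μ : PMF α) (S : Set α) : ℝ≥0∞ := μ.toOuterMeasure S

/-- The complete `k`-uniform hypergraph on `[n]`, as a list of hyperedges. -/
noncomputable def allSets (n k : ℕ) : List (Finset (Fin n)) :=
  ((Finset.univ : Finset (Fin n)).powersetCard k).toList

/-- Degree of a vertex in a multigraph: number of edges incident to it, with multiplicity. -/
def degOf {n : ℕ} (v : Fin n) (G : Multiset (Finset (Fin n))) : ℕ :=
  Multiset.card (G.filter fun D => v ∈ D)

/-- Poisson-Binomial: number of successes in independent trials with the given success
probabilities. -/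
noncomputable def pbPMF : List ℝ≥0∞ → PMF ℕ
  | [] => PMF.pure 0
  | q :: T => (bern q).bind fun b => (pbPMF T).map fun m => if b then m + 1 else m

/-- Binomial distribution `Bin(m, q)` on `ℕ`. -/
noncomputable def binomPMF (m : ℕ) (q : ℝ≥0∞) : PMF ℕ := pbPMF (List.replicate m q)

open Classical in
/-- Number of triangles of a multigraph: triples of vertices all of whose pairs are joined
by at least one edge. -/
noncomputable def triangleCount {n : ℕ} (G : Multiset (Finset (Fin n))) : ℕ :=
  ((Finset.univ : Finset (Finset (Fin n))).filter fun T =>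
    T.card = 3 ∧ ∀ i ∈ T, ∀ j ∈ T, i ≠ j → ({i, j} : Finset (Fin n)) ∈ G).card

/-- Transition matrix of the Markov chain on `{0,1,2,3}` tracking how many pairs of a fixed
triple are joined: `P(j → j+1) = (3-j)p/6`, `P(j → j) = 1 - (3-j)p/6`, state `3`
absorbing. -/
noncomputable def trMat (p : ℝ) : Matrix (Fin 4) (Fin 4) ℝ :=
  !![1 - p / 2, p / 2, 0, 0;
     0, 1 - p / 3, p / 3, 0;
     0, 0, 1 - p / 6, p / 6;
     0, 0, 0, 1]

/-!
By linearity of expectation, the expected number of triangles is `C(n,3)` times the probability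
that a fixed triple `T` spans a triangle. Inclusion–exclusion over the three pairs of `T` turns
this into `∑_V (-1)^|V| P(no pair of V is an edge)`, and as the four-sets act independently the
latter factors over four-sets `H`: one containing `T` avoids `V` with probability `1 - |V|p/6`, one
meeting `T` in a pair of `V` with probability `1 - p/6`, and every other one surely. With
`x, y, z = (1-p/2)^(n-3), (1-p/3)^(n-3), (1-p/6)^(n-3)` and `u = (1-p/6)^C(n-3,2)` this gives
`1 - 3zu + 3yu² - xu³`. On the Markov chain side, `p₀₀, p₀₁, p₀₂` equal `x, 3(y-x), 3(z-2y+x)`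
and `P(Bin(C(n-3,2), p/6) ≥ 1) = 1 - u`, which yields the same expression.
-/

open Finset

section Probability
variable {α β ι : Type*}

theorem prob_add_prob_compl (μ : PMF α) (S : Set α) : prob μ S + prob μ Sᶜ = 1 := by
  rw [prob, prob, PMF.toOuterMeasure_apply, PMF.toOuterMeasure_apply, ← ENNReal.tsum_add]
  simp

theorem prob_ne_top (μ : PMF α) (S : Set α) : prob μ S ≠ ⊤ :=
  ne_top_of_le_ne_top ENNReal.one_ne_top (prob_add_prob_compl μ S ▸ le_self_add)

theorem toReal_prob_compl (μ : PMF α) (S : Set α) :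
    (prob μ Sᶜ).toReal = 1 - (prob μ S).toReal := by
  rw [eq_sub_iff_add_eq', ← ENNReal.toReal_add (prob_ne_top μ S) (prob_ne_top μ Sᶜ),
    prob_add_prob_compl, ENNReal.toReal_one]

theorem toReal_prob_eq_tsum (μ : PMF α) (S : Set α) :
    (prob μ S).toReal = ∑' x, (μ x).toReal * S.indicator 1 x := by
  rw [prob, PMF.toOuterMeasure_apply,
    ENNReal.tsum_toReal_eq fun x => ne_top_of_le_ne_top (μ.apply_ne_top x)
      (Set.indicator_le_self S μ x)]
  congr 1 with x
  by_cases hx : x ∈ S <;> simp [hx]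

theorem summable_toReal_mul_indicator (μ : PMF α) (S : Set α) :
    Summable fun x => (μ x).toReal * S.indicator (1 : α → ℝ) x :=
  (ENNReal.summable_toReal (by simp)).of_nonneg_of_le
    (fun x => mul_nonneg ENNReal.toReal_nonneg (Set.indicator_nonneg (by simp) x))
    (fun x => mul_le_of_le_one_right ENNReal.toReal_nonneg
      (Set.indicator_le_self' (by simp) x))

theorem indicator_biInter_one {R : Type*} [CommMonoidWithZero R] (s : Finset ι) (E : ι → Set α)
    (x : α) :
    (⋂ i ∈ s, E i).indicator (1 : α → R) x = ∏ i ∈ s, (E i).indicator 1 x := by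
  classical
  simp only [Set.indicator_apply, Set.mem_iInter, Pi.one_apply, Finset.prod_boole]

theorem toReal_prob_biInter (μ : PMF α) (s : Finset ι) (E : ι → Set α) :
    (prob μ (⋂ i ∈ s, E i)).toReal =
      ∑ t ∈ s.powerset, (-1) ^ #t * (prob μ (⋂ i ∈ t, (E i)ᶜ)).toReal := by
  classical
  have pointwise (x : α) : (⋂ i ∈ s, E i).indicator (1 : α → ℝ) x =
      ∑ t ∈ s.powerset, (-1) ^ #t * (⋂ i ∈ t, (E i)ᶜ).indicator 1 x := by
    have (i : ι) : (E i).indicator (1 : α → ℝ) x = 1 - (E i)ᶜ.indicator 1 x := by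
      rw [Set.indicator_compl]; simp
    simp_rw [indicator_biInter_one, this, Finset.prod_sub, Finset.prod_const_one, mul_one]
  simp_rw [toReal_prob_eq_tsum, pointwise, Finset.mul_sum, mul_left_comm _ ((-1 : ℝ) ^ _)]
  rw [Summable.tsum_finsetSum fun t _ => (summable_toReal_mul_indicator μ _).mul_left _]
  simp_rw [tsum_mul_left]

theorem tsum_toReal_mul_card_filter (μ : PMF α) (s : Finset β)
    (P : β → α → Prop) [∀ b x, Decidable (P b x)] :
    ∑' x, (μ x).toReal * #{b ∈ s | P b x} = ∑ b ∈ s, (prob μ {x | P b x}).toReal := by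
  have hcard (x : α) : (#{b ∈ s | P b x} : ℝ) = ∑ b ∈ s, {x | P b x}.indicator 1 x := by
    rw [card_filter]; push_cast; simp [Set.indicator_apply]
  simp_rw [hcard, mul_sum, toReal_prob_eq_tsum]
  exact Summable.tsum_finsetSum fun b _ => summable_toReal_mul_indicator μ _

end Probability

section Counting
variable {α : Type*} [Fintype α] [DecidableEq α]

theorem card_powersetCard_filter_inter_eq {T U : Finset α} (hUT : U ⊆ T) {k : ℕ}
    (hUk : #U ≤ k) :
    #{H ∈ univ.powersetCard k | H ∩ T = U} = (Fintype.card α - #T).choose (k - #U) := by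
  rw [← card_compl, ← card_powersetCard]
  symm
  apply card_nbij' (· ∪ U) (· \ T)
  · intro S hS
    simp only [mem_coe, mem_filter, mem_powersetCard, subset_compl_iff_disjoint_right] at hS ⊢
    refine ⟨⟨subset_univ _, ?_⟩, ?_⟩
    · rw [card_union_of_disjoint (hS.1.mono_right hUT), hS.2, Nat.sub_add_cancel hUk]
    · rw [union_inter_distrib_right, disjoint_iff_inter_eq_empty.1 hS.1, empty_union,
        inter_eq_left.2 hUT]
  · intro H hH
    simp only [mem_coe, mem_filter, mem_powersetCard, subset_compl_iff_disjoint_right] at hH ⊢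
    refine ⟨sdiff_disjoint, ?_⟩
    rw [card_sdiff, inter_comm, hH.2, hH.1.2]
  · intro S hS
    simp only [mem_coe, mem_powersetCard, subset_compl_iff_disjoint_right] at hS
    dsimp only
    rw [union_sdiff_distrib, sdiff_eq_empty_iff_subset.2 hUT, union_empty, hS.1.sdiff_eq_left]
  · intro H hH
    simp only [mem_coe, mem_filter] at hH
    dsimp only
    rw [← hH.2, sdiff_union_inter]

theorem prod_powersetCard_comp_inter {M : Type*} [CommMonoid M] (f : Finset α → M)
    {T : Finset α} {k : ℕ} (hTk : #T ≤ k) :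
    ∏ H ∈ univ.powersetCard k, f (H ∩ T) =
      ∏ U ∈ T.powerset, f U ^ (Fintype.card α - #T).choose (k - #U) := by
  rw [← prod_fiberwise_of_maps_to (g := (· ∩ T)) (t := T.powerset)
    fun H _ => mem_powerset.2 inter_subset_right]
  refine prod_congr rfl fun U hU => ?_
  rw [prod_congr rfl fun H hH => congrArg f (mem_filter.1 hH).2, prod_const,
    card_powersetCard_filter_inter_eq (mem_powerset.1 hU)
      ((card_le_card (mem_powerset.1 hU)).trans hTk)]

end Counting

section Model
variable {n : ℕ}

theorem bern_apply_true {p : ℝ≥0∞} (hp : p ≤ 1) : bern p true = p := by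
  simp [bern, PMF.ofFintype_apply, min_eq_left hp]

theorem edgePMF_apply_some {p : ℝ≥0∞} (hp : p ≤ 1) {H : Finset (Fin n)} (hH : #H = 4)
    (D : Finset (Fin n)) :
    edgePMF p H (some D) = if D ∈ H.powersetCard 2 then p / 6 else 0 := by
  have hpairs : #(H.powersetCard 2) = 6 := by rw [card_powersetCard, hH]; rfl
  have hne : (H.powersetCard 2).Nonempty := by rw [← card_pos, hpairs]; norm_num
  rw [edgePMF, dif_pos hne, PMF.bind_apply]
  simp [PMF.map_apply, bern_apply_true hp, PMF.uniformOfFinset_apply, hpairs,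
    ENNReal.div_eq_inv_mul]

theorem toReal_prob_edgePMF_avoid {q : ℝ} (hq0 : 0 ≤ q) (hq1 : q ≤ 1) {H : Finset (Fin n)}
    (hH : #H = 4) (V : Finset (Finset (Fin n))) :
    (prob (edgePMF (ENNReal.ofReal q) H) {o | ∀ D ∈ V, o ≠ some D}).toReal =
      1 - #{D ∈ V | D ∈ H.powersetCard 2} * q / 6 := by
  have hS : {o | ∀ D ∈ V, o ≠ some D} = (↑(V.image some) : Set (Option (Finset (Fin n))))ᶜ := by
    ext o; simp [eq_comm]
  rw [hS, toReal_prob_compl, prob, PMF.toOuterMeasure_apply_finset,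
    sum_image fun _ _ _ _ => Option.some_inj.mp,
    ENNReal.toReal_sum fun D _ => PMF.apply_ne_top _ _]
  simp [edgePMF_apply_some (ENNReal.ofReal_le_one.mpr hq1) hH, apply_ite ENNReal.toReal, sum_ite,
    hq0, mul_div_assoc]

theorem prob_modelPMF_avoid (p : ℝ≥0∞) (V : Finset (Finset (Fin n)))
    (L : List (Finset (Fin n))) :
    prob (modelPMF p L) {G | ∀ D ∈ V, D ∉ G} =
      (L.map fun H => prob (edgePMF p H) {o | ∀ D ∈ V, o ≠ some D}).prod := by
  induction L with
  | nil => simp [modelPMF, prob, PMF.toOuterMeasure_pure_apply]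
  | cons H L ih =>
    have hpre (o : Option (Finset (Fin n))) :
        (fun G => o.elim G (· ::ₘ G)) ⁻¹' {G | ∀ D ∈ V, D ∉ G} =
          if ∀ D ∈ V, o ≠ some D then {G | ∀ D ∈ V, D ∉ G} else ∅ := by
      rcases o with _ | D
      · simp
      · ext G
        simp only [Set.mem_preimage, Option.elim, Multiset.mem_cons, Set.mem_ofPred_eq]
        grind
    rw [modelPMF, prob, PMF.toOuterMeasure_bind_apply, List.map_cons, List.prod_cons, ← ih,
      prob, PMF.toOuterMeasure_apply, ← ENNReal.tsum_mul_right]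
    congr 1 with o
    rw [PMF.toOuterMeasure_map_apply, hpre]
    split_ifs with ho
    · rw [Set.indicator_of_mem (s := {o | ∀ D ∈ V, o ≠ some D}) ho, prob]
    · rw [Set.indicator_of_notMem (s := {o | ∀ D ∈ V, o ≠ some D}) ho]
      simp

theorem toReal_prob_modelPMF_avoid_pairs {q : ℝ} (hq0 : 0 ≤ q) (hq1 : q ≤ 1)
    {T : Finset (Fin n)} (hT : #T = 3) {V : Finset (Finset (Fin n))}
    (hV : V ⊆ T.powersetCard 2) :
    (prob (modelPMF (ENNReal.ofReal q) (allSets n 4)) {G | ∀ D ∈ V, D ∉ G}).toReal =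
      (1 - #V * q / 6) ^ (n - 3) * (1 - q / 6) ^ ((n - 3).choose 2 * #V) := by
  have mem_V {D} (hD : D ∈ V) : D ⊆ T ∧ #D = 2 := mem_powersetCard.1 (hV hD)
  have pairs_in_inter (H : Finset (Fin n)) :
      #{D ∈ V | D ∈ H.powersetCard 2} = #{D ∈ V | D ⊆ H ∩ T} := by
    congr 1
    refine filter_congr fun D hD => ?_
    simp [mem_powersetCard, subset_inter_iff, (mem_V hD).1, (mem_V hD).2]
  have eq_of_subset {D U} (hD : D ∈ V) (hU : U ⊆ T) (hUT : U ≠ T) (hDU : D ⊆ U) : D = U := by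
    refine eq_of_subset_of_card_le hDU ?_
    have := card_lt_card (ssubset_of_subset_of_ne hU hUT)
    have := (mem_V hD).2
    omega
  rw [prob_modelPMF_avoid, allSets, prod_map_toList, ENNReal.toReal_prod,
    prod_congr rfl fun H hH => toReal_prob_edgePMF_avoid hq0 hq1 (mem_powersetCard.1 hH).2 V]
  simp_rw [pairs_in_inter]
  rw [prod_powersetCard_comp_inter (fun U => 1 - #{D ∈ V | D ⊆ U} * q / 6) (by omega),
    Fintype.card_fin, hT]
  have hTV : T ∉ V := fun h => by have := (mem_V h).2; omega
  rw [← prod_subset (s₁ := insert T V) ?_ ?_, prod_insert hTV]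
  · have only_self {U} (hU : U ∈ V) : #{D ∈ V | D ⊆ U} = 1 :=
      card_eq_one.2 ⟨U, ext fun D => ⟨fun hD => mem_singleton.2 <| eq_of_subset
        (mem_filter.1 hD).1 (mem_V hU).1 (ne_of_mem_of_not_mem hU hTV) (mem_filter.1 hD).2,
        fun hD => mem_filter.2 ⟨mem_singleton.1 hD ▸ hU, (mem_singleton.1 hD).le⟩⟩⟩
    rw [filter_true_of_mem fun D hD => (mem_V hD).1, hT,
      prod_congr rfl fun U hU => by rw [only_self hU, (mem_V hU).2], prod_const, ← pow_mul]
    norm_num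
  · exact insert_subset (mem_powerset.2 subset_rfl) fun U hU => mem_powerset.2 (mem_V hU).1
  · intro U hU hUV
    rw [mem_insert, not_or] at hUV
    rw [filter_false_of_mem fun D hD hDU =>
      hUV.2 (eq_of_subset hD (mem_powerset.1 hU) hUV.1 hDU ▸ hD)]
    simp

theorem toReal_prob_triangle {q : ℝ} (hq0 : 0 ≤ q) (hq1 : q ≤ 1) {T : Finset (Fin n)}
    (hT : #T = 3) :
    (prob (modelPMF (ENNReal.ofReal q) (allSets n 4))
        {G | ∀ i ∈ T, ∀ j ∈ T, i ≠ j → ({i, j} : Finset (Fin n)) ∈ G}).toReal =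
      ∑ m ∈ range 4, (3 : ℕ).choose m • ((-1) ^ m *
        ((1 - m * q / 6) ^ (n - 3) * (1 - q / 6) ^ ((n - 3).choose 2 * m))) := by
  have hev : {G : Multiset (Finset (Fin n)) | ∀ i ∈ T, ∀ j ∈ T, i ≠ j → {i, j} ∈ G} =
      ⋂ D ∈ T.powersetCard 2, {G | D ∈ G} := by
    ext G
    simp only [Set.mem_ofPred_eq, Set.mem_iInter, mem_powersetCard, card_eq_two]
    constructor
    · rintro h D ⟨hDT, i, j, hij, rfl⟩
      exact h i (hDT (by simp)) j (hDT (by simp)) hij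
    · intro h i hi j hj hij
      exact h {i, j} ⟨insert_subset hi (singleton_subset_iff.2 hj), i, j, hij, rfl⟩
  have hcompl (V : Finset (Finset (Fin n))) :
      ⋂ D ∈ V, {G : Multiset (Finset (Fin n)) | D ∈ G}ᶜ = {G | ∀ D ∈ V, D ∉ G} := by
    ext G; simp
  have hpairs : #(T.powersetCard 2) = 3 := by rw [card_powersetCard, hT]; rfl
  rw [hev, toReal_prob_biInter, sum_congr rfl fun V hV => by
    rw [hcompl, toReal_prob_modelPMF_avoid_pairs hq0 hq1 hT (mem_powerset.1 hV)],
    sum_powerset_apply_card (fun m => (-1) ^ m *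
      ((1 - m * q / 6) ^ (n - 3) * (1 - q / 6) ^ ((n - 3).choose 2 * m))), hpairs]

open Classical in
theorem triangleCount_eq_card_filter (G : Multiset (Finset (Fin n))) :
    triangleCount G =
      #{T ∈ univ.powersetCard 3 | ∀ i ∈ T, ∀ j ∈ T, i ≠ j → ({i, j} : Finset (Fin n)) ∈ G} := by
  rw [triangleCount, powersetCard_eq_filter, powerset_univ, filter_filter]

end Model

theorem pbPMF_apply_zero (L : List ℝ≥0∞) : pbPMF L 0 = (L.map fun q => 1 - min q 1).prod := by
  induction L with
  | nil => simp [pbPMF]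
  | cons q L ih =>
    simp [pbPMF, PMF.bind_apply, PMF.map_apply, ih, bern]

theorem toReal_prob_binomPMF_pos (M : ℕ) {q : ℝ} (hq0 : 0 ≤ q) (hq1 : q ≤ 1) :
    (prob (binomPMF M (ENNReal.ofReal q)) {m | 1 ≤ m}).toReal = 1 - (1 - q) ^ M := by
  have hS : {m : ℕ | 1 ≤ m} = {0}ᶜ := by ext m; simp [Nat.one_le_iff_ne_zero]
  rw [hS, toReal_prob_compl, prob, PMF.toOuterMeasure_apply_singleton, binomPMF,
    pbPMF_apply_zero, List.map_replicate, List.prod_replicate,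
    min_eq_left (ENNReal.ofReal_le_one.2 hq1), ← ENNReal.ofReal_one, ← ENNReal.ofReal_sub _ hq0,
    ENNReal.toReal_pow, ENNReal.toReal_ofReal (by linarith)]

theorem trMat_pow_apply (p : ℝ) (t : ℕ) :
    (trMat p ^ t) 0 0 = (1 - p / 2) ^ t ∧
    (trMat p ^ t) 0 1 = 3 * ((1 - p / 3) ^ t - (1 - p / 2) ^ t) ∧
    (trMat p ^ t) 0 2 = 3 * ((1 - p / 6) ^ t - 2 * (1 - p / 3) ^ t + (1 - p / 2) ^ t) := by
  induction t with
  | zero => norm_num [Matrix.one_apply, Fin.ext_iff]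
  | succ t ih =>
    obtain ⟨h0, h1, h2⟩ := ih
    refine ⟨?_, ?_, ?_⟩ <;>
      rw [pow_succ, Matrix.mul_apply, Fin.sum_univ_four, h0, h1, h2] <;>
      simp only [trMat, Matrix.of_apply, Matrix.cons_val', Matrix.cons_val, Matrix.cons_val_zero,
        Matrix.cons_val_one, Matrix.cons_val_fin_one, mul_zero, zero_add, add_zero] <;> ring

theorem expected_triangles_four_uniform_general (n : ℕ) (p : ℝ)
    (hp0 : 0 ≤ p) (hp1 : p ≤ 1) :
    (∑' G, (modelPMF (ENNReal.ofReal p) (allSets n 4) G).toReal * (triangleCount G : ℝ)) =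
      (n.choose 3 : ℝ) *
        ((1 - ∑ i ∈ ({0, 1, 2} : Finset (Fin 4)), (trMat p ^ (n - 3)) 0 i) +
          ∑ i ∈ ({0, 1, 2} : Finset (Fin 4)), (trMat p ^ (n - 3)) 0 i *
            (prob (binomPMF ((n - 3).choose 2) (ENNReal.ofReal (p / 6)))
                {m : ℕ | 1 ≤ m}).toReal ^ (3 - (i : ℕ))) := by
  simp_rw [triangleCount_eq_card_filter, tsum_toReal_mul_card_filter]
  rw [sum_congr rfl fun T hT => toReal_prob_triangle hp0 hp1 (mem_powersetCard.1 hT).2,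
    sum_const, card_powersetCard, card_univ, Fintype.card_fin, nsmul_eq_mul]
  congr 1
  have sum_012 (f : Fin 4 → ℝ) : ∑ i ∈ ({0, 1, 2} : Finset (Fin 4)), f i = f 0 + f 1 + f 2 := by
    simp [add_assoc]
  obtain ⟨h0, h1, h2⟩ := trMat_pow_apply p (n - 3)
  rw [sum_012, sum_012, h0, h1, h2, toReal_prob_binomPMF_pos _ (by linarith) (by linarith)]
  norm_num [sum_range_succ, pow_mul]
  rw [show (1 - 2 * p / 6 : ℝ) = 1 - p / 3 by ring, show (1 - 3 * p / 6 : ℝ) = 1 - p / 2 by ring]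
  ring

/-- The expected number of triangles in `G(n,p;C([n],4))` equals
`C(n,3)·[(1 - Σ_{i=0}^{2} p₀ᵢ⁽ⁿ⁻³⁾) + Σ_{i=0}^{2} p₀ᵢ⁽ⁿ⁻³⁾·P(Bin(C(n-3,2), p/6) ≥ 1)^(3-i)]`,
where `p₀ᵢ⁽ⁿ⁻³⁾` is the `(0,i)` entry of the `(n-3)`-rd power of the transition matrix. -/
theorem expected_triangles_four_uniform (n : ℕ) (hn : 3 ≤ n) (p : ℝ)
    (hp0 : 0 ≤ p) (hp1 : p ≤ 1) :
    (∑' G, (modelPMF (ENNReal.ofReal p) (allSets n 4) G).toReal * (triangleCount G : ℝ)) =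
      (n.choose 3 : ℝ) *
        ((1 - ∑ i ∈ ({0, 1, 2} : Finset (Fin 4)), (trMat p ^ (n - 3)) 0 i) +
          ∑ i ∈ ({0, 1, 2} : Finset (Fin 4)), (trMat p ^ (n - 3)) 0 i *
            (prob (binomPMF ((n - 3).choose 2) (ENNReal.ofReal (p / 6)))
                {m : ℕ | 1 ≤ m}).toReal ^ (3 - (i : ℕ))) :=
  expected_triangles_four_uniform_general n p hp0 hp1
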